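/- Let P₁ = (M₁, κ₁) and P₂ = (M₂, κ₂) be complete deterministic Parity acceptors over the same finite alphabet with finite state sets. Then ⟦P₁⟧ ⊆ ⟦P₂⟧ if and only if there is no reachable SCC C of the product automaton M₁ × M₂ such that the minimum of κ₁ over π₁(C) is odd and the minimum of κ₂ over π₂(C) is even. Moreover, if ⟦P₁⟧ is not a subset of ⟦P₂⟧, then there exist u ∈ Σ* and v ∈ Σ⁺ such that the ultimately periodic ω-word u(v)^ω is in ⟦P₁⟧ \ ⟦P₂⟧. -/

import Mathlib

open Filter

/-- Extended transition function: `dstar δ q x` is the state reached from `q` reading `x`. -/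
def dstar {Q A : Type*} (δ : Q → A → Q) (q : Q) (x : List A) : Q := x.foldl δ q

/-- The run of a deterministic automaton on an ω-word from state `q`. -/
def run {Q A : Type*} (δ : Q → A → Q) (q : Q) (w : ℕ → A) : ℕ → Q
  | 0 => q
  | n + 1 => δ (run δ q w n) (w n)

/-- The set of states visited infinitely often by the run on `w` from `q`. -/
def infOcc {Q A : Type*} (δ : Q → A → Q) (q : Q) (w : ℕ → A) : Set Q :=
  {p | ∃ᶠ n in atTop, run δ q w n = p}

/-- `C` is a strongly connected component of the automaton with transitions `δ`. -/
def IsSCC {Q A : Type*} (δ : Q → A → Q) (C : Set Q) : Prop :=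
  C.Nonempty ∧ ∀ q₁ ∈ C, ∀ q₂ ∈ C, ∃ x : List A, x ≠ [] ∧ dstar δ q₁ x = q₂ ∧
    ∀ x', x' <+: x → dstar δ q₁ x' ∈ C

/-- `q` is reachable from the initial state `qι`. -/
def Reachable {Q A : Type*} (δ : Q → A → Q) (qι q : Q) : Prop :=
  ∃ x : List A, dstar δ qι x = q

/-- The ultimately periodic ω-word `u(v)^ω`. -/
def upWord {A : Type*} (u v : List A) (hv : v ≠ []) : ℕ → A := fun n =>
  if h : n < u.length then u[n]
  else v[(n - u.length) % v.length]'(Nat.mod_lt _ (List.length_pos_iff.mpr hv))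

/-- The transition function of the product automaton. -/
def prodStep {Q₁ Q₂ A : Type*} (δ₁ : Q₁ → A → Q₁) (δ₂ : Q₂ → A → Q₂) :
    Q₁ × Q₂ → A → Q₁ × Q₂ := fun p a => (δ₁ p.1 a, δ₂ p.2 a)

/-- The ω-word `x·z` obtained by prepending the finite word `x` to `z`. -/
def prepend {A : Type*} (x : List A) (z : ℕ → A) : ℕ → A := fun n =>
  if h : n < x.length then x[n] else z (n - x.length)

/-- Acceptance of a deterministic Parity acceptor. -/
def parityAccept {Q A : Type*} (δ : Q → A → Q) (qι : Q) (κ : Q → ℕ) (w : ℕ → A) : Prop :=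
  Odd (sInf (κ '' infOcc δ qι w))

/-!
The states visited infinitely often by the product run on a word form a reachable SCC whose
projections are exactly the states visited infinitely often by the two component runs, so a word
in `⟦P₁⟧ \ ⟦P₂⟧` yields a bad SCC. Conversely, given a reachable bad SCC `C`, pick `a ∈ C`
minimising `κ₁ ∘ fst` and `b ∈ C` minimising `κ₂ ∘ snd`. Reading a word `u` leading to `a` and
then forever a cycle `v` inside `C` through `a` and `b` gives a run whose infinity set lies in `C`
and contains `a` and `b`, hence has the same two minimal colours as `C`.
-/

section DeterministicParity

variable {α β Q Q₁ Q₂ A : Type*}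

theorem eventually_mem_setOf_frequently [Finite α] (s : ℕ → α) :
    ∀ᶠ n in atTop, s n ∈ {a | ∃ᶠ m in atTop, s m = a} := by
  have h (a : α) : ∀ᶠ n in atTop, s n = a → ∃ᶠ m in atTop, s m = a := by
    by_cases ha : ∃ᶠ m in atTop, s m = a
    · exact .of_forall fun _ _ => ha
    · exact (not_frequently.mp ha).mono fun n hn h => absurd h hn
  exact (eventually_all.mpr h).mono fun n hn => hn (s n) rfl

theorem image_setOf_frequently [Finite α] (s : ℕ → α) (f : α → β) :
    f '' {a | ∃ᶠ n in atTop, s n = a} = {b | ∃ᶠ n in atTop, f (s n) = b} := by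
  ext b
  constructor
  · rintro ⟨a, ha, rfl⟩
    exact ha.mono fun n hn => by rw [hn]
  · intro hb
    obtain ⟨n, hfn, hmem⟩ := (hb.and_eventually (eventually_mem_setOf_frequently s)).exists
    exact ⟨s n, hmem, hfn⟩

theorem dstar_append (δ : Q → A → Q) (q : Q) (x y : List A) :
    dstar δ q (x ++ y) = dstar δ (dstar δ q x) y :=
  List.foldl_append ..

theorem run_add (δ : Q → A → Q) (q : Q) (w : ℕ → A) (n k : ℕ) :
    run δ q w (n + k) = dstar δ (run δ q w n) ((List.range k).map fun i => w (n + i)) := by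
  induction k with
  | zero => rfl
  | succ k ih =>
    rw [← Nat.add_assoc, run, ih, List.range_succ, List.map_append, dstar_append]
    rfl

theorem run_eq_dstar (δ : Q → A → Q) (q : Q) (w : ℕ → A) (n : ℕ) :
    run δ q w n = dstar δ q ((List.range n).map w) := by
  simpa [run] using run_add δ q w 0 n

theorem run_prodStep (δ₁ : Q₁ → A → Q₁) (δ₂ : Q₂ → A → Q₂) (q₁ : Q₁) (q₂ : Q₂) (w : ℕ → A)
    (n : ℕ) : run (prodStep δ₁ δ₂) (q₁, q₂) w n = (run δ₁ q₁ w n, run δ₂ q₂ w n) := by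
  induction n with
  | zero => rfl
  | succ n ih => simp only [run, ih, prodStep]

section Product

variable [Finite Q₁] [Finite Q₂] (δ₁ : Q₁ → A → Q₁) (δ₂ : Q₂ → A → Q₂) (q₁ : Q₁) (q₂ : Q₂)
  (w : ℕ → A)

theorem image_fst_infOcc_prodStep :
    Prod.fst '' infOcc (prodStep δ₁ δ₂) (q₁, q₂) w = infOcc δ₁ q₁ w := by
  simp only [infOcc, image_setOf_frequently, run_prodStep]

theorem image_snd_infOcc_prodStep :
    Prod.snd '' infOcc (prodStep δ₁ δ₂) (q₁, q₂) w = infOcc δ₂ q₂ w := by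
  simp only [infOcc, image_setOf_frequently, run_prodStep]

end Product

section Automaton

variable (δ : Q → A → Q) (q : Q)

theorem reachable_of_mem_infOcc {w : ℕ → A} {p : Q} (hp : p ∈ infOcc δ q w) :
    Reachable δ q p := by
  obtain ⟨n, hn⟩ := hp.exists
  exact ⟨(List.range n).map w, by rw [← run_eq_dstar, hn]⟩

theorem isSCC_infOcc [Finite Q] (w : ℕ → A) : IsSCC δ (infOcc δ q w) := by
  obtain ⟨N, hN⟩ := eventually_atTop.mp (eventually_mem_setOf_frequently (run δ q w))
  refine ⟨⟨run δ q w N, hN N le_rfl⟩, fun a ha b hb => ?_⟩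
  obtain ⟨n, hNn, rfl⟩ := frequently_atTop.mp ha N
  obtain ⟨m, hnm, rfl⟩ := frequently_atTop.mp hb (n + 1)
  refine ⟨(List.range (m - n)).map fun i => w (n + i), by simp; omega, ?_, fun x hx => ?_⟩
  · rw [← run_add, Nat.add_sub_cancel' (by omega)]
  · obtain ⟨k, hk, rfl⟩ : ∃ k ≤ m - n, x = (List.range k).map fun i => w (n + i) :=
      ⟨min x.length (m - n), min_le_right .., by
        nth_rw 1 [List.prefix_iff_eq_take.mp hx]
        rw [← List.map_take, List.take_range]⟩
    rw [← run_add]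
    exact hN _ (by omega)

theorem forall_prefix_dstar_mem_append {C : Set Q} {p p' : Q} {x y : List A}
    (hx : ∀ x', x' <+: x → dstar δ p x' ∈ C) (hxp : dstar δ p x = p')
    (hy : ∀ y', y' <+: y → dstar δ p' y' ∈ C) :
    ∀ z, z <+: x ++ y → dstar δ p z ∈ C := by
  intro z hz
  rcases le_or_gt z.length x.length with h | h
  · exact hx z (List.prefix_of_prefix_length_le hz (x.prefix_append y) h)
  · obtain ⟨r, rfl⟩ := List.prefix_of_prefix_length_le (x.prefix_append y) hz h.le
    rw [dstar_append, hxp]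
    exact hy r ((List.prefix_append_right_inj x).mp hz)

end Automaton

section UltimatelyPeriodic

variable (u v : List A) (hv : v ≠ [])

theorem map_range_upWord : (List.range u.length).map (upWord u v hv) = u := by
  refine List.ext_getElem (by simp) fun i hi _ => ?_
  simp only [List.getElem_map, List.getElem_range, upWord, dif_pos (by simpa using hi)]

theorem map_range_upWord_period (m : ℕ) {k : ℕ} (hk : k ≤ v.length) :
    (List.range k).map (fun i => upWord u v hv (u.length + m * v.length + i)) = v.take k := by
  refine List.ext_getElem (by simpa using hk) fun i hi _ => ?_
  have hik : i < v.length := by simp at hi; omega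
  simp [upWord, Nat.add_assoc, Nat.mod_eq_of_lt hik]

variable (δ : Q → A → Q) (q : Q)

theorem run_upWord_of_loop (hloop : dstar δ (dstar δ q u) v = dstar δ q u) (m : ℕ) {j : ℕ}
    (hj : j ≤ v.length) :
    run δ q (upWord u v hv) (u.length + m * v.length + j) = dstar δ (dstar δ q u) (v.take j) := by
  have hperiod (m : ℕ) : run δ q (upWord u v hv) (u.length + m * v.length) = dstar δ q u := by
    induction m with
    | zero => simp [run_eq_dstar, map_range_upWord]
    | succ m ih =>
      rw [Nat.succ_mul, ← Nat.add_assoc, run_add, map_range_upWord_period u v hv m le_rfl, ih,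
        List.take_length, hloop]
  rw [run_add, map_range_upWord_period u v hv m hj, hperiod]

theorem infOcc_upWord_of_loop (hloop : dstar δ (dstar δ q u) v = dstar δ q u) :
    infOcc δ q (upWord u v hv) = {p | ∃ j < v.length, dstar δ (dstar δ q u) (v.take j) = p} := by
  have hlen : 0 < v.length := List.length_pos_iff.mpr hv
  ext p
  constructor
  · intro hp
    obtain ⟨n, hn, rfl⟩ := frequently_atTop.mp hp u.length
    refine ⟨(n - u.length) % v.length, Nat.mod_lt _ hlen, ?_⟩
    rw [← run_upWord_of_loop u v hv δ q hloop _ (Nat.mod_lt _ hlen).le, Nat.add_assoc,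
      Nat.div_add_mod', Nat.add_sub_cancel' hn]
  · rintro ⟨j, hj, rfl⟩
    refine frequently_atTop.mpr fun N => ⟨u.length + N * v.length + j, ?_,
      run_upWord_of_loop u v hv δ q hloop N hj.le⟩
    nlinarith

end UltimatelyPeriodic

theorem IsSCC.exists_upWord_infOcc_subset {δ : Q → A → Q} {q : Q} {C : Set Q}
    (hC : IsSCC δ C) {a b : Q} (ha : a ∈ C) (hb : b ∈ C) (hreach : Reachable δ q a) :
    ∃ (u v : List A) (hv : v ≠ []), infOcc δ q (upWord u v hv) ⊆ C ∧
      a ∈ infOcc δ q (upWord u v hv) ∧ b ∈ infOcc δ q (upWord u v hv) := by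
  obtain ⟨x, hx, hxb, hxC⟩ := hC.2 a ha b hb
  obtain ⟨y, hy, hya, hyC⟩ := hC.2 b hb a ha
  obtain ⟨u, rfl⟩ := hreach
  have hv : x ++ y ≠ [] := by simp [hx]
  have hloop : dstar δ (dstar δ q u) (x ++ y) = dstar δ q u := by rw [dstar_append, hxb, hya]
  refine ⟨u, x ++ y, hv, ?_⟩
  rw [infOcc_upWord_of_loop u _ hv δ q hloop]
  refine ⟨?_, ⟨0, List.length_pos_iff.mpr hv, rfl⟩, ⟨x.length, ?_, ?_⟩⟩
  · rintro _ ⟨j, -, rfl⟩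
    exact forall_prefix_dstar_mem_append δ hxC hxb hyC _ (List.take_prefix _ _)
  · simpa using List.length_pos_iff.mpr hy
  · rw [List.take_left, hxb]

theorem Nat.sInf_image_image_eq_of_subset {f : α → β} {κ : β → ℕ} {S C : Set α} (hSC : S ⊆ C)
    {p : α} (hp : p ∈ S) (hmin : κ (f p) = sInf (κ '' (f '' C))) :
    sInf (κ '' (f '' S)) = sInf (κ '' (f '' C)) := by
  have hleast : IsLeast (κ '' (f '' S)) (κ (f p)) := by
    refine ⟨⟨f p, ⟨p, hp, rfl⟩, rfl⟩, ?_⟩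
    rintro _ ⟨_, ⟨r, hr, rfl⟩, rfl⟩
    exact hmin ▸ Nat.sInf_le ⟨f r, ⟨r, hSC hr, rfl⟩, rfl⟩
  exact hleast.csInf_eq.trans hmin

section Inclusion

variable [Finite Q₁] [Finite Q₂] {δ₁ : Q₁ → A → Q₁} {q₁ : Q₁} {κ₁ : Q₁ → ℕ}
  {δ₂ : Q₂ → A → Q₂} {q₂ : Q₂} {κ₂ : Q₂ → ℕ}

theorem exists_upWord_of_isSCC_prodStep {C : Set (Q₁ × Q₂)} (hC : IsSCC (prodStep δ₁ δ₂) C)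
    (hreach : ∀ p ∈ C, Reachable (prodStep δ₁ δ₂) (q₁, q₂) p)
    (h₁ : Odd (sInf (κ₁ '' (Prod.fst '' C)))) (h₂ : Even (sInf (κ₂ '' (Prod.snd '' C)))) :
    ∃ (u v : List A) (hv : v ≠ []),
      parityAccept δ₁ q₁ κ₁ (upWord u v hv) ∧ ¬ parityAccept δ₂ q₂ κ₂ (upWord u v hv) := by
  obtain ⟨_, ⟨a, ha, rfl⟩, hmin₁⟩ := Nat.sInf_mem ((hC.1.image Prod.fst).image κ₁)
  obtain ⟨_, ⟨b, hb, rfl⟩, hmin₂⟩ := Nat.sInf_mem ((hC.1.image Prod.snd).image κ₂)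
  obtain ⟨u, v, hv, hsub, haS, hbS⟩ := hC.exists_upWord_infOcc_subset ha hb (hreach a ha)
  refine ⟨u, v, hv, ?_, ?_⟩
  · rw [parityAccept, ← image_fst_infOcc_prodStep δ₁ δ₂,
      Nat.sInf_image_image_eq_of_subset hsub haS hmin₁]
    exact h₁
  · rw [parityAccept, ← image_snd_infOcc_prodStep δ₁ δ₂,
      Nat.sInf_image_image_eq_of_subset hsub hbS hmin₂, Nat.not_odd_iff_even]
    exact h₂

theorem exists_isSCC_prodStep_of_not_subset
    (h : ¬ {w : ℕ → A | parityAccept δ₁ q₁ κ₁ w} ⊆ {w | parityAccept δ₂ q₂ κ₂ w}) :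
    ∃ C : Set (Q₁ × Q₂), IsSCC (prodStep δ₁ δ₂) C ∧
      (∀ p ∈ C, Reachable (prodStep δ₁ δ₂) (q₁, q₂) p) ∧
      Odd (sInf (κ₁ '' (Prod.fst '' C))) ∧ Even (sInf (κ₂ '' (Prod.snd '' C))) := by
  obtain ⟨w, hw₁, hw₂⟩ := Set.not_subset.mp h
  refine ⟨infOcc (prodStep δ₁ δ₂) (q₁, q₂) w, isSCC_infOcc _ _ _,
    fun p => reachable_of_mem_infOcc _ _, ?_, ?_⟩
  · rwa [image_fst_infOcc_prodStep]
  · rwa [image_snd_infOcc_prodStep, ← Nat.not_odd_iff_even]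

end Inclusion

end DeterministicParity

theorem stmt11_general {A Q₁ Q₂ : Type*} [Fintype Q₁] [Fintype Q₂]
    (δ₁ : Q₁ → A → Q₁) (q₁ : Q₁) (κ₁ : Q₁ → ℕ)
    (δ₂ : Q₂ → A → Q₂) (q₂ : Q₂) (κ₂ : Q₂ → ℕ) :
    ({w : ℕ → A | parityAccept δ₁ q₁ κ₁ w} ⊆ {w | parityAccept δ₂ q₂ κ₂ w} ↔
      ¬ ∃ C : Set (Q₁ × Q₂), IsSCC (prodStep δ₁ δ₂) C ∧
        (∀ p ∈ C, Reachable (prodStep δ₁ δ₂) (q₁, q₂) p) ∧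
        Odd (sInf (κ₁ '' (Prod.fst '' C))) ∧ Even (sInf (κ₂ '' (Prod.snd '' C)))) ∧
    (¬ ({w : ℕ → A | parityAccept δ₁ q₁ κ₁ w} ⊆ {w | parityAccept δ₂ q₂ κ₂ w}) →
      ∃ (u v : List A) (hv : v ≠ []),
        parityAccept δ₁ q₁ κ₁ (upWord u v hv) ∧ ¬ parityAccept δ₂ q₂ κ₂ (upWord u v hv)) := by
  refine ⟨⟨fun hsub ⟨C, hC, hreach, h₁, h₂⟩ => ?_, fun hno => ?_⟩, fun h => ?_⟩
  · obtain ⟨u, v, hv, hacc₁, hacc₂⟩ := exists_upWord_of_isSCC_prodStep hC hreach h₁ h₂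
    exact hacc₂ (hsub hacc₁)
  · exact not_not.mp fun h => hno (exists_isSCC_prodStep_of_not_subset h)
  · obtain ⟨C, hC, hreach, h₁, h₂⟩ := exists_isSCC_prodStep_of_not_subset h
    exact exists_upWord_of_isSCC_prodStep hC hreach h₁ h₂

/-- Inclusion of DPAs holds iff no reachable SCC of the product has odd minimum `κ₁`-color on
its first projection and even minimum `κ₂`-color on its second projection; and non-inclusion
is witnessed by an ultimately periodic word. -/
theorem stmt11 {A Q₁ Q₂ : Type*} [Fintype A] [Fintype Q₁] [Fintype Q₂]
    (δ₁ : Q₁ → A → Q₁) (q₁ : Q₁) (κ₁ : Q₁ → ℕ)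
    (δ₂ : Q₂ → A → Q₂) (q₂ : Q₂) (κ₂ : Q₂ → ℕ) :
    ({w : ℕ → A | parityAccept δ₁ q₁ κ₁ w} ⊆ {w | parityAccept δ₂ q₂ κ₂ w} ↔
      ¬ ∃ C : Set (Q₁ × Q₂), IsSCC (prodStep δ₁ δ₂) C ∧
        (∀ p ∈ C, Reachable (prodStep δ₁ δ₂) (q₁, q₂) p) ∧
        Odd (sInf (κ₁ '' (Prod.fst '' C))) ∧ Even (sInf (κ₂ '' (Prod.snd '' C)))) ∧
    (¬ ({w : ℕ → A | parityAccept δ₁ q₁ κ₁ w} ⊆ {w | parityAccept δ₂ q₂ κ₂ w}) →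
      ∃ (u v : List A) (hv : v ≠ []),
        parityAccept δ₁ q₁ κ₁ (upWord u v hv) ∧ ¬ parityAccept δ₂ q₂ κ₂ (upWord u v hv)) :=
  stmt11_general δ₁ q₁ κ₁ δ₂ q₂ κ₂
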